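/- (Partition function from Gibbs family is an eternal solution.) Let (Q_v)_{v∈ℤ²} be a consistent family of semi-infinite polymer Gibbs measures for strictly positive weights (W_x), and fix u ∈ ℤ². Then the function Z(x) = (Q_v(X_m = x)/Z_{x,v}) · (Z_{u,v}/Q_v(X_{m'} = u)), for any v ≥ x ∨ u (with x on level m and u on level m'), is independent of the choice of v, satisfies Z(u) = 1, and is a strictly positive eternal solution: Z(x) = W_x[Z(x−e₁) + Z(x−e₂)] for every x ∈ ℤ². -/

import Mathlib

noncomputable section

/-- The standard basis vector `e₁ = (1,0)` of `ℤ²`. -/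
def e1 : ℤ × ℤ := (1, 0)

/-- The standard basis vector `e₂ = (0,1)` of `ℤ²`. -/
def e2 : ℤ × ℤ := (0, 1)

/-- The level (anti-diagonal index) of a lattice point. -/
def lev (x : ℤ × ℤ) : ℤ := x.1 + x.2

/-- The weight of a path between levels `m` and `n`, collecting the weights at
steps `m+1, …, n` (the weight at the initial level is excluded). -/
def pw (W : ℤ × ℤ → ℝ) (m n : ℤ) (p : ℤ → ℤ × ℤ) : ℝ :=
  ∏ i ∈ Finset.Ioc m n, W (p i)

/-- `p` is an up-right nearest-neighbor path from `u` to `v`, recorded as a function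
on all of `ℤ` that is frozen at `u` before `lev u` and at `v` after `lev v`. -/
def IsPath (u v : ℤ × ℤ) (p : ℤ → ℤ × ℤ) : Prop :=
  p (lev u) = u ∧ p (lev v) = v ∧
  (∀ i : ℤ, lev u < i → i ≤ lev v → (p i = p (i - 1) + e1 ∨ p i = p (i - 1) + e2)) ∧
  (∀ i : ℤ, i ≤ lev u → p i = u) ∧ (∀ i : ℤ, lev v ≤ i → p i = v)

/-- Point-to-point polymer partition function
`Z_{u,v} = Σ_{paths u→v} ∏_{i=lev u+1}^{lev v} W_{x_i}`. -/
def PF (W : ℤ × ℤ → ℝ) (u v : ℤ × ℤ) : ℝ :=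
  ∑' p : {p : ℤ → ℤ × ℤ // IsPath u v p}, pw W (lev u) (lev v) p.1

/-- Backward extension of a path starting at `x` by one step to `x - r`. -/
def extPath (x r : ℤ × ℤ) (p : ℤ → ℤ × ℤ) : ℤ → ℤ × ℤ :=
  fun i => if i < lev x then x - r else p i

/-- Concatenation at level `m`: follow `p` up to level `m`, then `q` afterwards. -/
def glue (m : ℤ) (p q : ℤ → ℤ × ℤ) : ℤ → ℤ × ℤ :=
  fun i => if i ≤ m then p i else q i
section Aux
open Finset

lemma prod_Ioc_split (f : ℤ → ℝ) {a b c : ℤ} (hab : a ≤ b) (hbc : b ≤ c) :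
    ∏ i ∈ Finset.Ioc a c, f i = (∏ i ∈ Finset.Ioc a b, f i) * ∏ i ∈ Finset.Ioc b c, f i := by
  rw [← Finset.prod_union (Finset.disjoint_left.mpr fun x hx hx2 => by
    simp [Finset.mem_Ioc] at hx hx2; omega), Finset.Ioc_union_Ioc_eq_Ioc hab hbc]

lemma Ioc_pred (m n : ℤ) (h : m ≤ n) :
    Finset.Ioc (m - 1) n = insert m (Finset.Ioc m n) := by
  ext i; simp [Finset.mem_Ioc]; omega

lemma lev_le_of_isPath {a c : ℤ × ℤ} {p : ℤ → ℤ × ℤ} (h : IsPath a c p) : lev a ≤ lev c := by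
  by_contra hlt
  push_neg at hlt
  have h1 : p (lev c) = a := h.2.2.2.1 (lev c) hlt.le
  have h2 : p (lev c) = c := h.2.1
  have : a = c := h1.symm.trans h2
  rw [this] at hlt; omega

def stairs (a c : ℤ × ℤ) : ℤ → ℤ × ℤ :=
  fun i => (a.1 + min (c.1 - a.1) (max 0 (i - lev a)),
            a.2 + max 0 (min (c.2 - a.2) (i - lev a - (c.1 - a.1))))

lemma exists_isPath {a c : ℤ × ℤ} (h : a ≤ c) : ∃ p, IsPath a c p := by
  obtain ⟨h1, h2⟩ := Prod.le_def.mp h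
  refine ⟨stairs a c, ?_, ?_, ?_, ?_, ?_⟩
  · simp [stairs, lev, Prod.ext_iff]; omega
  · simp [stairs, lev, Prod.ext_iff]; constructor <;> omega
  · intro i hi hi'
    simp only [lev] at hi hi'
    rcases le_or_gt i (a.1 + a.2 + (c.1 - a.1)) with h' | h'
    · left; simp [stairs, lev, e1, Prod.ext_iff]; constructor <;> omega
    · right; simp [stairs, lev, e2, Prod.ext_iff]; constructor <;> omega
  · intro i hi; simp only [lev] at hi; simp [stairs, lev, Prod.ext_iff]; constructor <;> omega
  · intro i hi; simp only [lev] at hi; simp [stairs, lev, Prod.ext_iff]; constructor <;> omega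

end Aux
section Aux2
open Finset

lemma e1_nonneg : (0 : ℤ × ℤ) ≤ e1 := by simp [e1, Prod.le_def]
lemma e2_nonneg : (0 : ℤ × ℤ) ≤ e2 := by simp [e2, Prod.le_def]

lemma isPath_lower {a c : ℤ × ℤ} {p : ℤ → ℤ × ℤ} (h : IsPath a c p) :
    ∀ i, lev a ≤ i → i ≤ lev c → a ≤ p i := by
  refine Int.le_induction (motive := fun i _ => i ≤ lev c → a ≤ p i) ?_ ?_
  · intro _; rw [h.1]
  · intro n hn ih hc
    rcases h.2.2.1 (n + 1) (by omega) hc with hs | hs <;>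
      · rw [hs]; simp only [add_sub_cancel_right]
        calc a ≤ p n := ih (by omega)
        _ ≤ p n + _ := le_add_of_nonneg_right (by first | exact e1_nonneg | exact e2_nonneg)

lemma isPath_upper {a c : ℤ × ℤ} {p : ℤ → ℤ × ℤ} (h : IsPath a c p) :
    ∀ i, lev a ≤ i → i ≤ lev c → p i ≤ c := by
  have key : ∀ i, lev a ≤ i → i ≤ lev c → ∀ j, i ≤ j → j ≤ lev c → p i ≤ p j := by
    intro i hi hic
    refine Int.le_induction (motive := fun j _ => j ≤ lev c → p i ≤ p j) ?_ ?_
    · intro _; exact le_refl _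
    · intro n hn ih hc
      rcases h.2.2.1 (n + 1) (by omega) hc with hs | hs <;>
        · rw [hs]; simp only [add_sub_cancel_right]
          calc p i ≤ p n := ih (by omega)
          _ ≤ p n + _ := le_add_of_nonneg_right (by first | exact e1_nonneg | exact e2_nonneg)
  intro i hi hic
  have := key i hi hic (lev c) hic le_rfl
  rwa [h.2.1] at this

instance isPath_finite (a c : ℤ × ℤ) : Finite {p : ℤ → ℤ × ℤ // IsPath a c p} := by
  by_cases hac : lev a ≤ lev c
  · set F : {p : ℤ → ℤ × ℤ // IsPath a c p} →
        (Finset.Icc (lev a) (lev c) → Finset.Icc a c) :=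
      fun p i => ⟨p.1 i.1, by
        have hi := Finset.mem_Icc.mp i.2
        exact Finset.mem_Icc.mpr ⟨isPath_lower p.2 i.1 hi.1 hi.2, isPath_upper p.2 i.1 hi.1 hi.2⟩⟩
    have hF : Function.Injective F := by
      intro p q hpq
      apply Subtype.ext
      funext i
      rcases le_or_gt i (lev a) with hi | hi
      · rcases lt_or_ge i (lev a) with hi' | hi'
        · rw [p.2.2.2.2.1 i hi, q.2.2.2.2.1 i hi]
        · have hmem : i ∈ Finset.Icc (lev a) (lev c) := Finset.mem_Icc.mpr ⟨hi', le_trans hi hac⟩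
          exact Subtype.ext_iff.mp (congrFun hpq ⟨i, hmem⟩)
      · rcases le_or_gt i (lev c) with hi' | hi'
        · have hmem : i ∈ Finset.Icc (lev a) (lev c) := Finset.mem_Icc.mpr ⟨hi.le, hi'⟩
          exact Subtype.ext_iff.mp (congrFun hpq ⟨i, hmem⟩)
        · rw [p.2.2.2.2.2 i hi'.le, q.2.2.2.2.2 i hi'.le]
    exact Finite.of_injective F hF
  · haveI : IsEmpty {p : ℤ → ℤ × ℤ // IsPath a c p} :=
      ⟨fun p => absurd (lev_le_of_isPath p.2) hac⟩
    exact Finite.of_subsingleton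

lemma pw_pos {W : ℤ × ℤ → ℝ} (hW : ∀ x, 0 < W x) (m n : ℤ) (p : ℤ → ℤ × ℤ) :
    0 < pw W m n p :=
  Finset.prod_pos fun _ _ => hW _

lemma pf_pos {W : ℤ × ℤ → ℝ} (hW : ∀ x, 0 < W x) {a c : ℤ × ℤ} (h : a ≤ c) :
    0 < PF W a c := by
  obtain ⟨p, hp⟩ := exists_isPath h
  exact Summable.tsum_pos Summable.of_finite (fun q => (pw_pos hW _ _ _).le) ⟨p, hp⟩ (pw_pos hW _ _ _)

end Aux2
section Aux3

lemma lev_sub_e1 (x : ℤ × ℤ) : lev (x - e1) = lev x - 1 := by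
  simp [lev, e1, Prod.sub_def]; ring
lemma lev_sub_e2 (x : ℤ × ℤ) : lev (x - e2) = lev x - 1 := by
  simp [lev, e2, Prod.sub_def]; ring

lemma ext_isPath {x v : ℤ × ℤ} {p : ℤ → ℤ × ℤ} {r : ℤ × ℤ} (hr : r = e1 ∨ r = e2)
    (h : IsPath x v p) : IsPath (x - r) v (extPath x r p) := by
  have hlev : lev (x - r) = lev x - 1 := by
    rcases hr with hr | hr <;> rw [hr] <;> [exact lev_sub_e1 x; exact lev_sub_e2 x]
  have hxv : lev x ≤ lev v := lev_le_of_isPath h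
  refine ⟨?_, ?_, ?_, ?_, ?_⟩
  · rw [hlev]; simp only [extPath, if_pos (by omega : lev x - 1 < lev x)]
  · simp only [extPath, if_neg (by omega : ¬ lev v < lev x)]; exact h.2.1
  · intro i hi1 hi2
    rw [hlev] at hi1
    rcases eq_or_lt_of_le (by omega : lev x ≤ i) with hix | hix
    · have h1 : extPath x r p i = x := by
        simp only [extPath, ← hix, if_neg (lt_irrefl _)]; rw [← hix] at *; exact h.1
      have h2 : extPath x r p (i - 1) = x - r := by
        simp only [extPath, if_pos (by omega : i - 1 < lev x)]
      rcases hr with hr | hr <;> subst hr <;> [left; right] <;> rw [h1, h2, sub_add_cancel]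
    · have h1 : extPath x r p i = p i := by simp only [extPath, if_neg (by omega : ¬ i < lev x)]
      have h2 : extPath x r p (i - 1) = p (i - 1) := by
        simp only [extPath, if_neg (by omega : ¬ i - 1 < lev x)]
      rw [h1, h2]; exact h.2.2.1 i hix hi2
  · intro i hi; rw [hlev] at hi; simp only [extPath, if_pos (by omega : i < lev x)]
  · intro i hi
    simp only [extPath, if_neg (by omega : ¬ i < lev x)]; exact h.2.2.2.2 i hi

lemma pw_ext {W : ℤ × ℤ → ℝ} {x v : ℤ × ℤ} {p : ℤ → ℤ × ℤ} (r : ℤ × ℤ)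
    (h : IsPath x v p) :
    pw W (lev x - 1) (lev v) (extPath x r p) = W x * pw W (lev x) (lev v) p := by
  have hxv : lev x ≤ lev v := lev_le_of_isPath h
  unfold pw
  rw [Ioc_pred _ _ hxv, Finset.prod_insert (by simp)]
  congr 1
  · congr 1
    simp only [extPath, if_neg (lt_irrefl _)]; exact h.1
  · refine Finset.prod_congr rfl fun i hi => ?_
    have : ¬ i < lev x := by simp [Finset.mem_Ioc] at hi; omega
    simp only [extPath, if_neg this]

lemma glue_isPath {a b c : ℤ × ℤ} {p q : ℤ → ℤ × ℤ}
    (hp : IsPath a b p) (hq : IsPath b c q) : IsPath a c (glue (lev b) p q) := by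
  have hab : lev a ≤ lev b := lev_le_of_isPath hp
  have hbc : lev b ≤ lev c := lev_le_of_isPath hq
  have hbceq : lev b = lev c → b = c := by
    intro h; have h1 := hq.1; have h2 := hq.2.1; rw [h] at h1; exact h1.symm.trans h2
  refine ⟨?_, ?_, ?_, ?_, ?_⟩
  · simp only [glue, if_pos hab]; exact hp.1
  · rcases eq_or_lt_of_le hbc with he | hlt
    · have h1 : glue (lev b) p q (lev c) = p (lev c) := if_pos he.ge
      rw [h1, ← he, hp.2.1]; exact hbceq he
    · simp only [glue, if_neg (not_le.mpr hlt)]; exact hq.2.1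
  · intro i hi1 hi2
    rcases le_or_gt i (lev b) with hib | hib
    · have h1 : glue (lev b) p q i = p i := if_pos hib
      have h2 : glue (lev b) p q (i - 1) = p (i - 1) := if_pos (by omega)
      rw [h1, h2]; exact hp.2.2.1 i hi1 hib
    · have h1 : glue (lev b) p q i = q i := if_neg (not_le.mpr hib)
      rcases eq_or_lt_of_le (by omega : lev b + 1 ≤ i) with he | hlt
      · have h2 : glue (lev b) p q (i - 1) = q (i - 1) := by
          have hi1b : i - 1 = lev b := by omega
          show (if i - 1 ≤ lev b then p (i - 1) else q (i - 1)) = q (i - 1)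
          rw [if_pos hi1b.le, hi1b, hp.2.1, hq.1]
        rw [h1, h2]; exact hq.2.2.1 i hib hi2
      · have h2 : glue (lev b) p q (i - 1) = q (i - 1) := if_neg (by omega)
        rw [h1, h2]; exact hq.2.2.1 i hib hi2
  · intro i hi; simp only [glue, if_pos (le_trans hi hab)]; exact hp.2.2.2.1 i hi
  · intro i hi
    rcases eq_or_lt_of_le hbc with he | hlt
    · rcases le_or_gt i (lev b) with hib | hib
      · have h1 : glue (lev b) p q i = p i := if_pos hib
        have hieq : i = lev b := by omega
        rw [h1, hieq, hp.2.1]; exact hbceq he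
      · simp only [glue, if_neg (not_le.mpr hib)]; exact hq.2.2.2.2 i hi
    · simp only [glue, if_neg (by omega : ¬ i ≤ lev b)]; exact hq.2.2.2.2 i hi

lemma pw_glue {W : ℤ × ℤ → ℝ} {a b c : ℤ × ℤ} {p q : ℤ → ℤ × ℤ}
    (hp : IsPath a b p) (hq : IsPath b c q) :
    pw W (lev a) (lev c) (glue (lev b) p q)
      = pw W (lev a) (lev b) p * pw W (lev b) (lev c) q := by
  have hab : lev a ≤ lev b := lev_le_of_isPath hp
  have hbc : lev b ≤ lev c := lev_le_of_isPath hq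
  unfold pw
  rw [prod_Ioc_split _ hab hbc]
  congr 1
  · refine Finset.prod_congr rfl fun i hi => ?_
    have : i ≤ lev b := (Finset.mem_Ioc.mp hi).2
    simp only [glue, if_pos this]
  · refine Finset.prod_congr rfl fun i hi => ?_
    have : ¬ i ≤ lev b := not_le.mpr (Finset.mem_Ioc.mp hi).1
    simp only [glue, if_neg this]

end Aux3

theorem stmt17 (W : ℤ × ℤ → ℝ) (hW : ∀ x, 0 < W x)
    -- `Qm v m p` is the finite-dimensional marginal that the semi-infinite polymer
    -- measure rooted at `v` assigns to the path segment `p` from level `m` to `lev v`;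
    -- `QX v x` is the marginal probability that the path passes through `x`.
    (Qm : ℤ × ℤ → ℤ → (ℤ → ℤ × ℤ) → ℝ) (QX : ℤ × ℤ → ℤ × ℤ → ℝ)
    (hQnn : ∀ v m p, 0 ≤ Qm v m p)
    (hNorm : ∀ (v : ℤ × ℤ) (p : ℤ → ℤ × ℤ), IsPath v v p → Qm v (lev v) p = 1)
    (hFdd : ∀ (v x : ℤ × ℤ) (p : ℤ → ℤ × ℤ), IsPath x v p →
      Qm v (lev x - 1) (extPath x e1 p) + Qm v (lev x - 1) (extPath x e2 p)
        = Qm v (lev x) p)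
    (hQpos : ∀ v x : ℤ × ℤ, x ≤ v → 0 < QX v x)
    (hQX : ∀ v x : ℤ × ℤ, x ≤ v →
      QX v x = ∑' p : {p : ℤ → ℤ × ℤ // IsPath x v p}, Qm v (lev x) p.1)
    (hGibbs : ∀ (v x : ℤ × ℤ) (p : ℤ → ℤ × ℤ), IsPath x v p →
      Qm v (lev x) p * PF W x v = QX v x * pw W (lev x) (lev v) p)
    (hCons : ∀ (v x u : ℤ × ℤ) (p : ℤ → ℤ × ℤ), IsPath u x p → x ≤ v →
      (∑' q : {q : ℤ → ℤ × ℤ // IsPath x v q}, Qm v (lev u) (glue (lev x) p q.1))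
        = Qm x (lev u) p * QX v x)
    (u : ℤ × ℤ) :
    ∃ Z : ℤ × ℤ → ℝ, (∀ x, 0 < Z x) ∧ Z u = 1 ∧
      (∀ x : ℤ × ℤ, Z x = W x * (Z (x - e1) + Z (x - e2))) ∧
      (∀ x v : ℤ × ℤ, x ≤ v → u ≤ v →
        Z x = QX v x / PF W x v * (PF W u v / QX v u)) := by
  have hPF : ∀ {a c : ℤ × ℤ}, a ≤ c → (0:ℝ) < PF W a c := fun h => pf_pos hW h
  have fpos : ∀ {a c : ℤ × ℤ}, a ≤ c → 0 < QX c a / PF W a c :=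
    fun h => div_pos (hQpos _ _ h) (hPF h)
  have chain : ∀ a b c : ℤ × ℤ, a ≤ b → b ≤ c →
      QX c a * (PF W a b * PF W b c) = QX b a * QX c b * PF W a c := by
    intro a b c hab hbc
    obtain ⟨p, hp⟩ := exists_isPath hab
    have hcons := hCons c b a p hp hbc
    have nac := (hPF (hab.trans hbc)).ne'
    have hterm : ∀ q : {q : ℤ → ℤ × ℤ // IsPath b c q},
        Qm c (lev a) (glue (lev b) p q.1)
          = QX c a * pw W (lev a) (lev b) p / PF W a c * pw W (lev b) (lev c) q.1 := by
      intro q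
      have hGib := hGibbs c a _ (glue_isPath hp q.2)
      rw [pw_glue hp q.2] at hGib
      field_simp
      linear_combination hGib
    rw [tsum_congr hterm, tsum_mul_left] at hcons
    have hPFbc : (∑' q : {q : ℤ → ℤ × ℤ // IsPath b c q}, pw W (lev b) (lev c) q.1)
        = PF W b c := rfl
    rw [hPFbc] at hcons
    have hGp := hGibbs b a p hp
    have hpwp := pw_pos hW (lev a) (lev b) p
    have h1 : QX c a * pw W (lev a) (lev b) p * PF W b c
        = Qm b (lev a) p * QX c b * PF W a c := by
      field_simp at hcons; linear_combination hcons
    apply mul_left_cancel₀ hpwp.ne'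
    linear_combination PF W a b * h1 + QX c b * PF W a c * hGp
  have chainf : ∀ a b c : ℤ × ℤ, a ≤ b → b ≤ c →
      QX c a / PF W a c = (QX b a / PF W a b) * (QX c b / PF W b c) := by
    intro a b c hab hbc
    have h := chain a b c hab hbc
    have nab := (hPF hab).ne'
    have nbc := (hPF hbc).ne'
    have nac := (hPF (hab.trans hbc)).ne'
    field_simp
    linear_combination h
  have recur : ∀ x v : ℤ × ℤ, x ≤ v →
      QX v x * (PF W (x - e1) v * PF W (x - e2) v)
        = W x * (QX v (x - e1) * PF W (x - e2) v + QX v (x - e2) * PF W (x - e1) v)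
          * PF W x v := by
    intro x v hxv
    obtain ⟨p, hp⟩ := exists_isPath hxv
    have hG1 := hGibbs v (x - e1) _ (ext_isPath (Or.inl rfl) hp)
    have hG2 := hGibbs v (x - e2) _ (ext_isPath (Or.inr rfl) hp)
    have hG0 := hGibbs v x p hp
    rw [lev_sub_e1, pw_ext e1 hp] at hG1
    rw [lev_sub_e2, pw_ext e2 hp] at hG2
    have hF := hFdd v x p hp
    have hpwp := pw_pos hW (lev x) (lev v) p
    apply mul_left_cancel₀ hpwp.ne'
    linear_combination (-(PF W (x - e1) v * PF W (x - e2) v)) * hG0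
      + (PF W x v * PF W (x - e2) v) * hG1 + (PF W x v * PF W (x - e1) v) * hG2
      - (PF W x v * PF W (x - e1) v * PF W (x - e2) v) * hF
  have recf : ∀ x v : ℤ × ℤ, x ≤ v → QX v x / PF W x v
      = W x * (QX v (x - e1) / PF W (x - e1) v + QX v (x - e2) / PF W (x - e2) v) := by
    intro x v hxv
    have h := recur x v hxv
    have n0 := (hPF hxv).ne'
    have n1 := (hPF (le_trans (sub_le_self x e1_nonneg) hxv)).ne'
    have n2 := (hPF (le_trans (sub_le_self x e2_nonneg) hxv)).ne'
    field_simp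
    linear_combination h
  have indep : ∀ x v : ℤ × ℤ, x ≤ v → u ≤ v →
      QX v x / PF W x v / (QX v u / PF W u v)
        = (QX (x ⊔ u) x / PF W x (x ⊔ u)) / (QX (x ⊔ u) u / PF W u (x ⊔ u)) := by
    intro x v hxv huv
    set m := x ⊔ u with hm
    set w := v ⊔ m with hw
    have hvw : v ≤ w := le_sup_left
    have hmw : m ≤ w := le_sup_right
    have hxm : x ≤ m := le_sup_left
    have hum : u ≤ m := le_sup_right
    have hAB : (QX v x / PF W x v) * (QX w v / PF W v w)
        = (QX m x / PF W x m) * (QX w m / PF W m w) :=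
      (chainf x v w hxv hvw).symm.trans (chainf x m w hxm hmw)
    have hBB : (QX v u / PF W u v) * (QX w v / PF W v w)
        = (QX m u / PF W u m) * (QX w m / PF W m w) :=
      (chainf u v w huv hvw).symm.trans (chainf u m w hum hmw)
    have p2 := fpos huv
    have p4 := fpos hum
    have p5 := fpos hvw
    have p6 := fpos hmw
    rw [div_eq_div_iff (ne_of_gt p2) (ne_of_gt p4)]
    apply mul_right_cancel₀ (mul_pos p5 p6).ne'
    linear_combination ((QX m u / PF W u m) * (QX w m / PF W m w)) * hAB
      - ((QX m x / PF W x m) * (QX w m / PF W m w)) * hBB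
  refine ⟨fun x => (QX (x ⊔ u) x / PF W x (x ⊔ u)) / (QX (x ⊔ u) u / PF W u (x ⊔ u)),
    ?_, ?_, ?_, ?_⟩
  · intro x
    exact div_pos (fpos le_sup_left) (fpos le_sup_right)
  · show (QX (u ⊔ u) u / PF W u (u ⊔ u)) / (QX (u ⊔ u) u / PF W u (u ⊔ u)) = 1
    exact div_self (fpos le_sup_right).ne'
  · intro x
    have hxm : x ≤ x ⊔ u := le_sup_left
    have hum : u ≤ x ⊔ u := le_sup_right
    have h1 : x - e1 ≤ x ⊔ u := le_trans (sub_le_self x e1_nonneg) hxm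
    have h2 : x - e2 ≤ x ⊔ u := le_trans (sub_le_self x e2_nonneg) hxm
    beta_reduce
    rw [← indep (x - e1) (x ⊔ u) h1 hum, ← indep (x - e2) (x ⊔ u) h2 hum,
      recf x (x ⊔ u) hxm]
    ring
  · intro x v hxv huv
    show (QX (x ⊔ u) x / PF W x (x ⊔ u)) / (QX (x ⊔ u) u / PF W u (x ⊔ u)) = _
    rw [← indep x v hxv huv]
    have n1 := (hPF hxv).ne'
    have n2 := (hPF huv).ne'
    have n3 := (hQpos v u huv).ne'
    have n4 := (hQpos v x hxv).ne'
    field_simp
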